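/- Minimization property of the Galerkin pair and the bound η ≤ η̃ (Theorem 4.1, last assertion, via problem (4.9)): Let f be square-ν-integrable and let P and Q be ℝ-linear subspaces of the space of curl pairs (i.e. closed under addition and scalar multiplication of pairs), such that ∫ τ·cv dν = ∫ cτ·v dν for all (v, cv) ∈ P and (τ, cτ) ∈ Q. Suppose (u_T, cu_T) ∈ P satisfies the primal Galerkin equations: ∫ μ⁻¹ cu_T·cv dν + ∫ β u_T·v dν = ∫ f·v dν for all (v, cv) ∈ P, and (σ_T, cσ_T) ∈ Q satisfies the dual Galerkin equations: ∫ β⁻¹ cσ_T·cτ dν + ∫ μ σ_T·τ dν = ∫ β⁻¹ f·cτ dν for all (τ, cτ) ∈ Q. Then for all (v, cv) ∈ P and (τ, cτ) ∈ Q, ∫ μ⁻¹|μ σ_T − cu_T|² dν + ∫ β⁻¹|cσ_T + β u_T − f|² dν ≤ ∫ μ⁻¹|μ τ − cv|² dν + ∫ β⁻¹|cτ + β v − f|² dν; in particular the estimator built from (u_T, σ_T) is bounded by the estimator built from u_T and any other recovered field τ ∈ Q. -/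

import Mathlib

/-!
Write a competitor as `(uT, cuT) + (v, cv) ∈ P` and `(σT, cσT) + (τ, cτ) ∈ Q`. Expanding the two
weighted squares, its estimator is the estimator of the Galerkin pair, plus a nonnegative sum of
weighted squares, plus twice a cross term. The cross term is the primal equation tested with
`(v, cv)`, plus the dual equation tested with `(τ, cτ)`, plus two instances of the integration by
parts identity, so it vanishes.
-/

open MeasureTheory RealInnerProductSpace
open scoped ENNReal

section WeightedL2

variable {Ω : Type*} [MeasurableSpace Ω] {ν : Measure Ω}
  {E : Type*} [NormedAddCommGroup E] [InnerProductSpace ℝ E]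

theorem memLp_top_and_inv_of_ae_bounds {c : Ω → ℝ} {a b : ℝ} (hc : AEMeasurable c ν) (ha : 0 < a)
    (hab : ∀ᵐ x ∂ν, a ≤ c x ∧ c x ≤ b) :
    MemLp c ∞ ν ∧ MemLp (fun x => (c x)⁻¹) ∞ ν := by
  refine ⟨memLp_top_of_bound hc.aestronglyMeasurable b ?_,
    memLp_top_of_bound hc.inv.aestronglyMeasurable a⁻¹ ?_⟩ <;>
    filter_upwards [hab] with x ⟨hax, hxb⟩
  · rwa [Real.norm_of_nonneg (ha.le.trans hax)]
  · rw [norm_inv, Real.norm_of_nonneg (ha.le.trans hax)]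
    exact inv_anti₀ ha hax

theorem MeasureTheory.MemLp.integrable_inner {F G : Ω → E} (hF : MemLp F 2 ν)
    (hG : MemLp G 2 ν) : Integrable (fun x => ⟪F x, G x⟫) ν :=
  (L2.integrable_inner (𝕜 := ℝ) (hF.toLp F) (hG.toLp G)).congr <| by
    filter_upwards [hF.coeFn_toLp, hG.coeFn_toLp] with x hFx hGx
    rw [hFx, hGx]

theorem MeasureTheory.MemLp.integrable_mul_inner {c : Ω → ℝ} {F G : Ω → E} (hc : MemLp c ∞ ν)
    (hF : MemLp F 2 ν) (hG : MemLp G 2 ν) : Integrable (fun x => c x * ⟪F x, G x⟫) ν :=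
  (hF.integrable_inner hG).mul_of_top_right hc

theorem integral_mul_norm_add_sq {c : Ω → ℝ} {G H : Ω → E} (hc : MemLp c ∞ ν)
    (hG : MemLp G 2 ν) (hH : MemLp H 2 ν) :
    ∫ x, c x * ‖G x + H x‖ ^ 2 ∂ν
      = (∫ x, c x * ‖G x‖ ^ 2 ∂ν) + 2 * (∫ x, c x * ⟪G x, H x⟫ ∂ν)
        + ∫ x, c x * ‖H x‖ ^ 2 ∂ν := by
  have hGG := hc.integrable_mul_inner hG hG
  have hGH := (hc.integrable_mul_inner hG hH).const_mul 2
  have hHH := hc.integrable_mul_inner hH hH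
  simp only [real_inner_self_eq_norm_sq] at hGG hHH
  rw [← integral_const_mul, ← integral_add hGG hGH, ← integral_add (by fun_prop) hHH]
  congr 1 with x
  rw [norm_add_sq_real]
  ring

theorem integral_mul_norm_sq_add_two_mul_le {c : Ω → ℝ} {G H : Ω → E} (hc : MemLp c ∞ ν)
    (hc₀ : ∀ᵐ x ∂ν, 0 ≤ c x) (hG : MemLp G 2 ν) (hH : MemLp H 2 ν) :
    (∫ x, c x * ‖G x‖ ^ 2 ∂ν) + 2 * (∫ x, c x * ⟪G x, H x⟫ ∂ν)
      ≤ ∫ x, c x * ‖G x + H x‖ ^ 2 ∂ν := by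
  have hHH : 0 ≤ ∫ x, c x * ‖H x‖ ^ 2 ∂ν :=
    integral_nonneg_of_ae (hc₀.mono fun x hx => mul_nonneg hx (sq_nonneg _))
  rw [integral_mul_norm_add_sq hc hG hH]
  linarith

theorem integral_galerkin_cross_term_eq_zero {μ β : Ω → ℝ}
    {f u cu σ cσ v cv τ cτ : Ω → E} (hμ : MemLp μ ∞ ν) (hμinv : MemLp (fun x => (μ x)⁻¹) ∞ ν)
    (hβ : MemLp β ∞ ν) (hβinv : MemLp (fun x => (β x)⁻¹) ∞ ν)
    (hμ₀ : ∀ᵐ x ∂ν, μ x ≠ 0) (hβ₀ : ∀ᵐ x ∂ν, β x ≠ 0) (hf : MemLp f 2 ν)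
    (hu : MemLp u 2 ν) (hcu : MemLp cu 2 ν) (hσ : MemLp σ 2 ν) (hcσ : MemLp cσ 2 ν)
    (hv : MemLp v 2 ν) (hcv : MemLp cv 2 ν) (hτ : MemLp τ 2 ν) (hcτ : MemLp cτ 2 ν)
    (hprimal : (∫ x, (μ x)⁻¹ * ⟪cu x, cv x⟫ ∂ν) + (∫ x, β x * ⟪u x, v x⟫ ∂ν)
      = ∫ x, ⟪f x, v x⟫ ∂ν)
    (hdual : (∫ x, (β x)⁻¹ * ⟪cσ x, cτ x⟫ ∂ν) + (∫ x, μ x * ⟪σ x, τ x⟫ ∂ν)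
      = ∫ x, (β x)⁻¹ * ⟪f x, cτ x⟫ ∂ν)
    (hibp₁ : ∫ x, ⟪σ x, cv x⟫ ∂ν = ∫ x, ⟪cσ x, v x⟫ ∂ν)
    (hibp₂ : ∫ x, ⟪τ x, cu x⟫ ∂ν = ∫ x, ⟪cτ x, u x⟫ ∂ν) :
    (∫ x, (μ x)⁻¹ * ⟪μ x • σ x - cu x, μ x • τ x - cv x⟫ ∂ν)
      + ∫ x, (β x)⁻¹ * ⟪cσ x + β x • u x - f x, cτ x + β x • v x⟫ ∂ν = 0 := by
  have expand_μ : ∀ᵐ x ∂ν, (μ x)⁻¹ * ⟪μ x • σ x - cu x, μ x • τ x - cv x⟫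
      = μ x * ⟪σ x, τ x⟫ - ⟪σ x, cv x⟫ - ⟪τ x, cu x⟫ + (μ x)⁻¹ * ⟪cu x, cv x⟫ := by
    filter_upwards [hμ₀] with x hx
    simp only [inner_sub_left, inner_sub_right, real_inner_smul_left, real_inner_smul_right,
      real_inner_comm (τ x) (cu x)]
    field_simp
    ring
  have expand_β : ∀ᵐ x ∂ν, (β x)⁻¹ * ⟪cσ x + β x • u x - f x, cτ x + β x • v x⟫
      = (β x)⁻¹ * ⟪cσ x, cτ x⟫ + ⟪cσ x, v x⟫ + ⟪cτ x, u x⟫ + β x * ⟪u x, v x⟫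
        - (β x)⁻¹ * ⟪f x, cτ x⟫ - ⟪f x, v x⟫ := by
    filter_upwards [hβ₀] with x hx
    simp only [inner_sub_left, inner_add_left, inner_add_right, real_inner_smul_left,
      real_inner_smul_right, real_inner_comm (cτ x) (u x)]
    field_simp
    ring
  -- the ten pairings from which `fun_prop` assembles the integrability side goals below
  have := hμ.integrable_mul_inner hσ hτ
  have := hσ.integrable_inner hcv
  have := hτ.integrable_inner hcu
  have := hμinv.integrable_mul_inner hcu hcv
  have := hβinv.integrable_mul_inner hcσ hcτ
  have := hcσ.integrable_inner hv
  have := hcτ.integrable_inner hu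
  have := hβ.integrable_mul_inner hu hv
  have := hβinv.integrable_mul_inner hf hcτ
  have := hf.integrable_inner hv
  rw [integral_congr_ae expand_μ, integral_congr_ae expand_β]
  simp (disch := fun_prop) only [integral_add, integral_sub]
  linarith

end WeightedL2

theorem galerkin_pair_minimizes_estimator_general
    {Ω : Type*} [MeasurableSpace Ω] (ν : MeasureTheory.Measure Ω)
    (μ β : Ω → ℝ) (m₁ m₂ b₁ b₂ : ℝ)
    (hm₁ : 0 < m₁) (hb₁ : 0 < b₁)
    (hμmeas : Measurable μ) (hβmeas : Measurable β)
    (hμbd : ∀ᵐ x ∂ν, m₁ ≤ μ x ∧ μ x ≤ m₂)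
    (hβbd : ∀ᵐ x ∂ν, b₁ ≤ β x ∧ β x ≤ b₂)
    (f : Ω → EuclideanSpace ℝ (Fin 3)) (hf : MemLp f 2 ν)
    (P Q : Submodule ℝ ((Ω → EuclideanSpace ℝ (Fin 3)) × (Ω → EuclideanSpace ℝ (Fin 3))))
    (hPL2 : ∀ p ∈ P, MemLp p.1 2 ν ∧ MemLp p.2 2 ν)
    (hQL2 : ∀ q ∈ Q, MemLp q.1 2 ν ∧ MemLp q.2 2 ν)
    (hibp : ∀ p ∈ P, ∀ q ∈ Q,
      ∫ x, ⟪q.1 x, p.2 x⟫ ∂ν = ∫ x, ⟪q.2 x, p.1 x⟫ ∂ν)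
    (uT cuT σT cσT : Ω → EuclideanSpace ℝ (Fin 3))
    (huTP : (uT, cuT) ∈ P) (hσTQ : (σT, cσT) ∈ Q)
    (hprimal : ∀ p ∈ P,
      (∫ x, (μ x)⁻¹ * ⟪cuT x, p.2 x⟫ ∂ν) + (∫ x, β x * ⟪uT x, p.1 x⟫ ∂ν)
        = ∫ x, ⟪f x, p.1 x⟫ ∂ν)
    (hdual : ∀ q ∈ Q,
      (∫ x, (β x)⁻¹ * ⟪cσT x, q.2 x⟫ ∂ν) + (∫ x, μ x * ⟪σT x, q.1 x⟫ ∂ν)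
        = ∫ x, (β x)⁻¹ * ⟪f x, q.2 x⟫ ∂ν) :
    ∀ p ∈ P, ∀ q ∈ Q,
      (∫ x, (μ x)⁻¹ * ‖μ x • σT x - cuT x‖ ^ 2 ∂ν)
        + (∫ x, (β x)⁻¹ * ‖cσT x + β x • uT x - f x‖ ^ 2 ∂ν)
      ≤ (∫ x, (μ x)⁻¹ * ‖μ x • q.1 x - p.2 x‖ ^ 2 ∂ν)
        + (∫ x, (β x)⁻¹ * ‖q.2 x + β x • p.1 x - f x‖ ^ 2 ∂ν) := by
  intro p hp q hq
  obtain ⟨d, hd, rfl⟩ : ∃ d ∈ P, p = (uT, cuT) + d := ⟨p - (uT, cuT), P.sub_mem hp huTP, by abel⟩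
  obtain ⟨e, he, rfl⟩ : ∃ e ∈ Q, q = (σT, cσT) + e := ⟨q - (σT, cσT), Q.sub_mem hq hσTQ, by abel⟩
  obtain ⟨hμ, hμinv⟩ := memLp_top_and_inv_of_ae_bounds hμmeas.aemeasurable hm₁ hμbd
  obtain ⟨hβ, hβinv⟩ := memLp_top_and_inv_of_ae_bounds hβmeas.aemeasurable hb₁ hβbd
  have hμpos : ∀ᵐ x ∂ν, 0 < μ x := hμbd.mono fun x hx => hm₁.trans_le hx.1
  have hβpos : ∀ᵐ x ∂ν, 0 < β x := hβbd.mono fun x hx => hb₁.trans_le hx.1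
  obtain ⟨hu, hcu⟩ := hPL2 _ huTP
  obtain ⟨hσ, hcσ⟩ := hQL2 _ hσTQ
  obtain ⟨hv, hcv⟩ := hPL2 d hd
  obtain ⟨hτ, hcτ⟩ := hQL2 e he
  have hcross := integral_galerkin_cross_term_eq_zero hμ hμinv hβ hβinv
    (hμpos.mono fun _ h => h.ne') (hβpos.mono fun _ h => h.ne') hf hu hcu hσ hcσ hv hcv hτ hcτ
    (hprimal d hd) (hdual e he) (hibp d hd _ hσTQ) (hibp _ huTP e he)
  have hμineq := integral_mul_norm_sq_add_two_mul_le hμinv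
    (hμpos.mono fun _ h => (inv_pos.2 h).le)
    (G := fun x => μ x • σT x - cuT x) (H := fun x => μ x • e.1 x - d.2 x)
    ((hσ.smul hμ).sub hcu) ((hτ.smul hμ).sub hcv)
  have hβineq := integral_mul_norm_sq_add_two_mul_le hβinv
    (hβpos.mono fun _ h => (inv_pos.2 h).le)
    (G := fun x => cσT x + β x • uT x - f x) (H := fun x => e.2 x + β x • d.1 x)
    ((hcσ.add (hu.smul hβ)).sub hf) (hcτ.add (hv.smul hβ))
  refine (le_of_eq ?_).trans ((add_le_add hμineq hβineq).trans (le_of_eq ?_))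
  · linarith
  · simp only [Prod.fst_add, Prod.snd_add, Pi.add_apply]
    congr 1 <;> refine integral_congr_ae (.of_forall fun x => ?_) <;> dsimp only <;> congr 3 <;> module

/-- Minimization property of the Galerkin pair and the bound η ≤ η̃
(Theorem 4.1, last assertion, via problem (4.9)): the Galerkin solutions
(u_T, σ_T) minimize the estimator functional over P × Q. -/
theorem galerkin_pair_minimizes_estimator
    {Ω : Type*} [MeasurableSpace Ω] (ν : MeasureTheory.Measure Ω)
    (μ β : Ω → ℝ) (m₁ m₂ b₁ b₂ : ℝ)
    (hm₁ : 0 < m₁) (hm₁₂ : m₁ ≤ m₂) (hb₁ : 0 < b₁) (hb₁₂ : b₁ ≤ b₂)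
    (hμmeas : Measurable μ) (hβmeas : Measurable β)
    (hμbd : ∀ᵐ x ∂ν, m₁ ≤ μ x ∧ μ x ≤ m₂)
    (hβbd : ∀ᵐ x ∂ν, b₁ ≤ β x ∧ β x ≤ b₂)
    (f : Ω → EuclideanSpace ℝ (Fin 3)) (hf : MemLp f 2 ν)
    (P Q : Submodule ℝ ((Ω → EuclideanSpace ℝ (Fin 3)) × (Ω → EuclideanSpace ℝ (Fin 3))))
    (hPL2 : ∀ p ∈ P, MemLp p.1 2 ν ∧ MemLp p.2 2 ν)
    (hQL2 : ∀ q ∈ Q, MemLp q.1 2 ν ∧ MemLp q.2 2 ν)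
    (hibp : ∀ p ∈ P, ∀ q ∈ Q,
      ∫ x, ⟪q.1 x, p.2 x⟫ ∂ν = ∫ x, ⟪q.2 x, p.1 x⟫ ∂ν)
    (uT cuT σT cσT : Ω → EuclideanSpace ℝ (Fin 3))
    (huTP : (uT, cuT) ∈ P) (hσTQ : (σT, cσT) ∈ Q)
    (hprimal : ∀ p ∈ P,
      (∫ x, (μ x)⁻¹ * ⟪cuT x, p.2 x⟫ ∂ν) + (∫ x, β x * ⟪uT x, p.1 x⟫ ∂ν)
        = ∫ x, ⟪f x, p.1 x⟫ ∂ν)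
    (hdual : ∀ q ∈ Q,
      (∫ x, (β x)⁻¹ * ⟪cσT x, q.2 x⟫ ∂ν) + (∫ x, μ x * ⟪σT x, q.1 x⟫ ∂ν)
        = ∫ x, (β x)⁻¹ * ⟪f x, q.2 x⟫ ∂ν) :
    ∀ p ∈ P, ∀ q ∈ Q,
      (∫ x, (μ x)⁻¹ * ‖μ x • σT x - cuT x‖ ^ 2 ∂ν)
        + (∫ x, (β x)⁻¹ * ‖cσT x + β x • uT x - f x‖ ^ 2 ∂ν)
      ≤ (∫ x, (μ x)⁻¹ * ‖μ x • q.1 x - p.2 x‖ ^ 2 ∂ν)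
        + (∫ x, (β x)⁻¹ * ‖q.2 x + β x • p.1 x - f x‖ ^ 2 ∂ν) :=
  galerkin_pair_minimizes_estimator_general ν μ β m₁ m₂ b₁ b₂ hm₁ hb₁ hμmeas hβmeas hμbd hβbd f hf P
    Q hPL2 hQL2 hibp uT cuT σT cσT huTP hσTQ hprimal hdual
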